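/- Let R be a commutative ring and X_1, …, X_n elements of R. Let S(t) = Π_{i=1}^{n} (1 + X_i·t) in the polynomial ring R[t], let S′(t) denote its formal derivative, and in R[[t]] let Q(t) = Σ_{k≥0} (−1)^k · p_k · t^k where p_k = Σ_{i=1}^n X_i^k (so p_0 = n·1). Then, as formal power series, t·S′(t) = S(t)·(n·1 − Q(t)). -/

import Mathlib

/-!
`S` is a product of the linear factors `1 + xᵢ t`, and `f ↦ t f' / f` turns products into sums.
For a single factor, `t (1 + x t)' = x t = (1 + x t) (1 - ∑ₖ (-x)^k t^k)` because the geometric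
series `∑ₖ (-x)^k t^k` inverts `1 + x t`; summing over the factors gives `n - Q`.
-/

open Polynomial PowerSeries

namespace PowerSeries

variable {R : Type*} [CommRing R]

theorem one_add_C_mul_X_mul_mk_neg_pow (a : R) :
    (1 + C a * X) * mk (fun k => (-a) ^ k) = 1 := by
  have h := congrArg (rescale (-a)) (mk_one_mul_one_sub_eq_one (S := R))
  rw [map_mul, rescale_mk, map_sub, map_one, rescale_X, map_neg] at h
  simpa [mul_comm, sub_eq_add_neg] using h

theorem X_mul_derivative_one_add_C_mul_X (a : R) :
    X * ((Polynomial.derivative (1 + Polynomial.C a * Polynomial.X) : R[X]) : R⟦X⟧) =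
      ((1 + Polynomial.C a * Polynomial.X : R[X]) : R⟦X⟧) * (1 - mk fun k => (-a) ^ k) := by
  rw [Polynomial.derivative_add, Polynomial.derivative_one, Polynomial.derivative_C_mul_X]
  push_cast
  rw [mul_sub, one_add_C_mul_X_mul_mk_neg_pow]
  ring

theorem X_mul_derivative_prod {ι : Type*} (s : Finset ι) (f : ι → R[X]) (g : ι → R⟦X⟧)
    (hfg : ∀ i ∈ s, X * ((Polynomial.derivative (f i) : R[X]) : R⟦X⟧) = (f i : R⟦X⟧) * g i) :
    X * ((Polynomial.derivative (∏ i ∈ s, f i) : R[X]) : R⟦X⟧) =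
      ((∏ i ∈ s, f i : R[X]) : R⟦X⟧) * ∑ i ∈ s, g i := by
  classical
  rw [derivative_prod_finset, Finset.mul_sum, ← Polynomial.coeToPowerSeries.ringHom_apply,
    map_sum, Finset.mul_sum]
  refine Finset.sum_congr rfl fun i hi => ?_
  rw [← Finset.mul_prod_erase s f hi, Polynomial.coeToPowerSeries.ringHom_apply]
  push_cast
  linear_combination ((∏ j ∈ s.erase i, f j : R[X]) : R⟦X⟧) * hfg i hi

end PowerSeries

/-- For `S(t) = ∏ᵢ (1 + Xᵢ t)` in `R[t]` and the power-sum generating series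
`Q(t) = ∑ₖ (-1)^k pₖ t^k` with `pₖ = ∑ᵢ Xᵢ^k`, we have `t·S'(t) = S(t)·(n·1 − Q(t))`
as formal power series. -/
theorem t_mul_deriv_eq {R : Type*} [CommRing R] {n : ℕ} (X : Fin n → R)
    (S : Polynomial R) (hS : S = ∏ i, (1 + Polynomial.C (X i) * Polynomial.X))
    (Q : PowerSeries R) (hQ : Q = PowerSeries.mk (fun k => (-1 : R) ^ k * ∑ i, X i ^ k)) :
    PowerSeries.X * (↑(Polynomial.derivative S) : PowerSeries R) =
      (↑S : PowerSeries R) * ((n : PowerSeries R) - Q) := by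
  have hQ_sum : Q = ∑ i, mk fun k => (-X i) ^ k := by
    ext k
    simp only [hQ, coeff_mk, map_sum, Finset.mul_sum]
    exact Finset.sum_congr rfl fun i _ => (neg_pow (X i) k).symm
  have hn_sub_Q : (n : PowerSeries R) - Q = ∑ i, (1 - mk fun k => (-X i) ^ k) := by
    simp [hQ_sum, Finset.sum_sub_distrib]
  rw [hn_sub_Q, hS]
  exact X_mul_derivative_prod _ _ _ fun i _ => X_mul_derivative_one_add_C_mul_X (X i)
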